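/- arXiv:1906.00878 — 5 statements merged into one kernel-verified Lean document; each statement's English description precedes it below -/
import Mathlib

section
/- For every positive integer k and nonnegative integer i ≤ k, if f(x) = x^{2k+1} then the function F(x) = -∑_{i=0}^{k} [(2k)!! / ((2k-2i)!! (2k-2i+1))] x^{2k+1-2i} satisfies F''(x) - x F'(x) = x^{2k+1}. -/
/-!
Write `L f = f'' - x f'`, so that `L (x ^ (n + 2)) = (n + 2) (n + 1) x ^ n - (n + 2) x ^ (n + 2)`.
The polynomials `F_k` of the statement satisfy `F_0 = -x` and the recursion
`F_(k+1) = (2k + 2) F_k - x ^ (2k + 3) / (2k + 3)`, hence by induction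
`L F_(k+1) = (2k + 2) x ^ (2k + 1) - ((2k + 2) x ^ (2k + 1) - x ^ (2k + 3)) = x ^ (2k + 3)`.
-/

/-- Double factorial: `n!! = n (n-2) (n-4) ⋯`, with `0!! = 1!! = 1`. -/
def dfac : ℕ → ℕ
  | 0 => 1
  | 1 => 1
  | (n + 2) => (n + 2) * dfac n

open Polynomial Finset

namespace Polynomial

variable {R : Type*} [CommRing R]

noncomputable def steinOperator : R[X] →ₗ[R] R[X] :=
  derivative ∘ₗ derivative - LinearMap.mulLeft R X ∘ₗ derivative

theorem steinOperator_apply (p : R[X]) :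
    steinOperator p = derivative (derivative p) - X * derivative p :=
  rfl

theorem steinOperator_X : steinOperator (X : R[X]) = -X := by
  simp [steinOperator_apply]

theorem steinOperator_X_pow_add_two (n : ℕ) :
    steinOperator (X ^ (n + 2) : R[X]) =
      ((n + 2) * (n + 1) : R) • X ^ n - (n + 2 : R) • X ^ (n + 2) := by
  simp only [steinOperator_apply, derivative_X_pow_succ, Nat.cast_add, Nat.cast_one, map_add,
    map_natCast, map_one, derivative_mul, derivative_natCast, derivative_one,
    add_zero, zero_mul, zero_add, smul_eq_C_mul, map_mul, map_ofNat]
  ring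

end Polynomial

theorem deriv_deriv_sub_mul_deriv_eval {𝕜 : Type*} [NontriviallyNormedField 𝕜] (p : 𝕜[X])
    (x : 𝕜) :
    deriv (deriv fun y => p.eval y) x - x * deriv (fun y => p.eval y) x =
      (steinOperator p).eval x := by
  have hp : deriv (fun y => p.eval y) = fun y => (derivative p).eval y :=
    funext fun y => p.deriv
  simp [hp, Polynomial.deriv, steinOperator_apply]

theorem dfac_add_two (n : ℕ) : dfac (n + 2) = (n + 2) * dfac n := rfl

theorem dfac_pos : ∀ n, 0 < dfac n
  | 0 => Nat.one_pos
  | 1 => Nat.one_pos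
  | (n + 2) => Nat.mul_pos (Nat.add_pos_right n two_pos) (dfac_pos n)

noncomputable def oddPowSteinCoeff (k i : ℕ) : ℝ :=
  (dfac (2 * k) : ℝ) / ((dfac (2 * k - 2 * i) : ℝ) * (2 * k - 2 * i + 1 : ℝ))

theorem oddPowSteinCoeff_zero (k : ℕ) : oddPowSteinCoeff k 0 = (2 * k + 1 : ℝ)⁻¹ := by
  have hdfac := (dfac_pos (2 * k)).ne'
  simp only [oddPowSteinCoeff, mul_zero, Nat.sub_zero, CharP.cast_eq_zero, sub_zero]
  field_simp

theorem oddPowSteinCoeff_succ_succ (k i : ℕ) :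
    oddPowSteinCoeff (k + 1) (i + 1) = (2 * k + 2 : ℝ) * oddPowSteinCoeff k i := by
  have hsub : 2 * (k + 1) - 2 * (i + 1) = 2 * k - 2 * i := by omega
  rw [oddPowSteinCoeff, oddPowSteinCoeff, hsub, mul_add 2 k 1, mul_one, dfac_add_two]
  push_cast
  ring

noncomputable def oddPowSteinSolution (k : ℕ) : ℝ[X] :=
  -∑ i ∈ range (k + 1), C (oddPowSteinCoeff k i) * X ^ (2 * k + 1 - 2 * i)

theorem oddPowSteinSolution_succ (k : ℕ) :
    oddPowSteinSolution (k + 1) =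
      (2 * k + 2 : ℝ) • oddPowSteinSolution k - (2 * k + 3 : ℝ)⁻¹ • X ^ (2 * k + 3) := by
  have hexp : ∀ i, 2 * (k + 1) + 1 - 2 * (i + 1) = 2 * k + 1 - 2 * i := by omega
  simp only [oddPowSteinSolution, sum_range_succ' _ (k + 1), oddPowSteinCoeff_succ_succ, hexp,
    oddPowSteinCoeff_zero, mul_zero, Nat.sub_zero, smul_neg, smul_sum, smul_eq_C_mul, C_mul,
    ← mul_assoc, neg_add']
  congr 1
  push_cast
  ring_nf

theorem steinOperator_oddPowSteinSolution (k : ℕ) :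
    steinOperator (oddPowSteinSolution k) = X ^ (2 * k + 1) := by
  induction k with
  | zero => simp [oddPowSteinSolution, oddPowSteinCoeff_zero, steinOperator_X]
  | succ k ih =>
    have hk : (2 * k + 3 : ℝ) ≠ 0 := by positivity
    have hlow : (2 * k + 3 : ℝ)⁻¹ * ((↑(2 * k + 1) + 2) * (↑(2 * k + 1) + 1)) = 2 * k + 2 := by
      push_cast
      field_simp
      ring
    have htop : (2 * k + 3 : ℝ)⁻¹ * (↑(2 * k + 1) + 2) = 1 := by
      push_cast
      field_simp
      ring
    rw [oddPowSteinSolution_succ, map_sub, map_smul, map_smul, ih,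
      show 2 * k + 3 = 2 * k + 1 + 2 by ring, steinOperator_X_pow_add_two,
      smul_sub, smul_smul, smul_smul, hlow, htop, one_smul, sub_sub_cancel]
    ring

theorem stmt_2_general (k : ℕ) (F : ℝ → ℝ)
    (hF : ∀ x : ℝ, F x =
      -∑ i ∈ Finset.range (k + 1),
        ((dfac (2 * k) : ℝ) / ((dfac (2 * k - 2 * i) : ℝ) * (2 * k - 2 * i + 1 : ℝ)))
          * x ^ (2 * k + 1 - 2 * i)) :
    ∀ x : ℝ, deriv (deriv F) x - x * deriv F x = x ^ (2 * k + 1) := by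
  have hF_eval : F = fun y => (oddPowSteinSolution k).eval y := by
    funext y
    simp [hF, oddPowSteinSolution, oddPowSteinCoeff, eval_finsetSum]
  intro x
  rw [hF_eval, deriv_deriv_sub_mul_deriv_eval, steinOperator_oddPowSteinSolution, eval_pow, eval_X]

/-- The explicit polynomial solves the Ornstein-Uhlenbeck Stein equation for
`h(x) = x^(2k+1)` (whose standard normal expectation is 0). -/
theorem stmt_2 (k : ℕ) (hk : 0 < k) (F : ℝ → ℝ)
    (hF : ∀ x : ℝ, F x =
      -∑ i ∈ Finset.range (k + 1),
        ((dfac (2 * k) : ℝ) / ((dfac (2 * k - 2 * i) : ℝ) * (2 * k - 2 * i + 1 : ℝ)))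
          * x ^ (2 * k + 1 - 2 * i)) :
    ∀ x : ℝ, deriv (deriv F) x - x * deriv F x = x ^ (2 * k + 1) :=
  stmt_2_general k F hF
end

section
/- Let r, λ > 0 and k a positive integer. The function F(x) = -∑_{j=0}^{k-1} [Γ(r+k) / ((k-j) λ^{j+1} Γ(r+k-j))] x^{k-j} + [Γ(r+k)/(λ^k Γ(r))] ∑_{j=0}^{k-1} 1/(λ(k-j)) satisfies x F''(x) + (r - λx) F'(x) = x^k - Γ(r+k)/(λ^k Γ(r)) for all x > 0. -/
open Real Finset

/-
On monomials the generator `A = gammaGenerator r λ` acts by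
`A x^(i+1) = (i+1) ((r+i) x^i - λ x^(i+1))`. After reindexing `i = k - 1 - j`, the coefficients
of `F` turn `A F` into `-Γ(r+k)/λ^k` times `∑ ((r+i) (λx)^i - (λx)^(i+1)) / Γ(r+i+1)`, which
telescopes to `1/Γ(r) - (λx)^k/Γ(r+k)` because `Γ(s+1) = s Γ(s)`.
-/

noncomputable def gammaGenerator (r lam : ℝ) (f : ℝ → ℝ) (x : ℝ) : ℝ :=
  x * deriv (deriv f) x + (r - lam * x) * deriv f x

theorem deriv_sum_mul_pow (s : Finset ℕ) (c : ℕ → ℝ) :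
    deriv (fun x : ℝ => ∑ i ∈ s, c i * x ^ i) = fun x => ∑ i ∈ s, c i * i * x ^ (i - 1) :=
  funext fun x => (HasDerivAt.fun_sum fun i _ => (hasDerivAt_pow i x).const_mul (c i)).deriv.trans
    (by simp only [mul_assoc])

theorem gammaGenerator_sum_mul_pow_succ_add_const (r lam C : ℝ) (s : Finset ℕ) (c : ℕ → ℝ)
    (x : ℝ) :
    gammaGenerator r lam (fun x => ∑ i ∈ s, c i * x ^ (i + 1) + C) x
      = ∑ i ∈ s, (i + 1) * c i * ((r + i) * x ^ i - lam * x ^ (i + 1)) := by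
  have h1 : deriv (fun x : ℝ => ∑ i ∈ s, c i * x ^ (i + 1) + C)
      = fun x => ∑ i ∈ s, c i * (i + 1) * x ^ i := by
    ext x
    rw [((HasDerivAt.fun_sum fun i _ => (hasDerivAt_pow (i + 1) x).const_mul (c i)).add_const
      C).deriv]
    push_cast
    simp only [mul_assoc]
  have h2 : x * deriv (fun x : ℝ => ∑ i ∈ s, c i * (i + 1) * x ^ i) x
      = ∑ i ∈ s, c i * (i + 1) * i * x ^ i := by
    rw [deriv_sum_mul_pow, mul_sum]
    refine sum_congr rfl fun i _ => ?_
    rcases Nat.eq_zero_or_pos i with rfl | hi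
    · simp
    · rw [← mul_pow_sub_one hi.ne' x]; ring
  rw [gammaGenerator, h1, h2, mul_sum, ← sum_add_distrib]
  refine sum_congr rfl fun i _ => ?_
  ring

theorem sum_range_div_gamma_telescope {r : ℝ} (hr : ∀ n : ℕ, r + n ≠ 0) (y : ℝ) (n : ℕ) :
    ∑ i ∈ range n, ((r + i) * y ^ i - y ^ (i + 1)) / Gamma (r + i + 1)
      = 1 / Gamma r - y ^ n / Gamma (r + n) := by
  have h : ∀ i : ℕ, ((r + i) * y ^ i - y ^ (i + 1)) / Gamma (r + i + 1)
      = y ^ i / Gamma (r + i) - y ^ (i + 1) / Gamma (r + ↑(i + 1)) := by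
    intro i
    rw [Nat.cast_succ, ← add_assoc, Gamma_add_one (hr i), sub_div, mul_div_mul_left _ _ (hr i)]
  rw [sum_congr rfl fun i _ => h i, sum_range_sub' (fun i => y ^ i / Gamma (r + i))]
  simp

theorem sum_range_gamma_reflect (r lam x : ℝ) (k : ℕ) :
    ∑ j ∈ range k,
        Gamma (r + k) / (((k : ℝ) - j) * lam ^ (j + 1) * Gamma (r + k - j)) * x ^ (k - j)
      = ∑ i ∈ range k,
        Gamma (r + k) / ((i + 1) * lam ^ (k - i) * Gamma (r + i + 1)) * x ^ (i + 1) := by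
  rw [← sum_range_reflect]
  refine sum_congr rfl fun i hi => ?_
  have hik := mem_range.mp hi
  have hcast : ((k - 1 - i : ℕ) : ℝ) = k - i - 1 := by
    rw [Nat.cast_sub (by omega), Nat.cast_sub (by omega)]; ring
  rw [hcast, show k - 1 - i + 1 = k - i by omega, show k - (k - 1 - i) = i + 1 by omega]
  ring_nf

theorem stmt_5_general (r lam : ℝ) (hr : 0 < r) (hlam : 0 < lam) (k : ℕ)
    (F : ℝ → ℝ)
    (hF : ∀ x : ℝ, F x =
      -∑ j ∈ Finset.range k,
          (Real.Gamma (r + k) / (((k : ℝ) - j) * lam ^ (j + 1) * Real.Gamma (r + k - j)))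
            * x ^ (k - j)
        + (Real.Gamma (r + k) / (lam ^ k * Real.Gamma r))
            * ∑ j ∈ Finset.range k, 1 / (lam * ((k : ℝ) - j))) :
    ∀ x : ℝ, 0 < x →
      x * deriv (deriv F) x + (r - lam * x) * deriv F x
        = x ^ k - Real.Gamma (r + k) / (lam ^ k * Real.Gamma r) := by
  intro x _
  have hF_reflect : F = fun x =>
      ∑ i ∈ range k, -(Gamma (r + k) / ((i + 1) * lam ^ (k - i) * Gamma (r + i + 1))) * x ^ (i + 1)
        + Gamma (r + k) / (lam ^ k * Gamma r) * ∑ j ∈ range k, 1 / (lam * ((k : ℝ) - j)) := by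
    ext x
    rw [hF, sum_range_gamma_reflect, ← sum_neg_distrib]
    simp only [neg_mul]
  have hcoeff : ∀ i ∈ range k,
      (i + 1) * -(Gamma (r + k) / ((i + 1) * lam ^ (k - i) * Gamma (r + i + 1)))
          * ((r + i) * x ^ i - lam * x ^ (i + 1))
        = -(Gamma (r + k) / lam ^ k)
          * (((r + i) * (lam * x) ^ i - (lam * x) ^ (i + 1)) / Gamma (r + i + 1)) := by
    intro i hi
    rw [← pow_sub_mul_pow lam (mem_range.mp hi).le]
    have hΓ := (Gamma_pos_of_pos (by positivity : 0 < r + i + 1)).ne'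
    field_simp
    ring
  show gammaGenerator r lam F x = _
  rw [hF_reflect, gammaGenerator_sum_mul_pow_succ_add_const, sum_congr rfl hcoeff, ← mul_sum,
    sum_range_div_gamma_telescope (fun n => by positivity)]
  have hΓ := (Gamma_pos_of_pos (by positivity : 0 < r + k)).ne'
  field_simp
  ring

/-- The explicit polynomial solves the Gamma(r, λ) Stein equation
`x F''(x) + (r - λx) F'(x) = x^k - Γ(r+k)/(λ^k Γ(r))` on `(0, ∞)`. -/
theorem stmt_5 (r lam : ℝ) (hr : 0 < r) (hlam : 0 < lam) (k : ℕ) (hk : 0 < k)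
    (F : ℝ → ℝ)
    (hF : ∀ x : ℝ, F x =
      -∑ j ∈ Finset.range k,
          (Real.Gamma (r + k) / (((k : ℝ) - j) * lam ^ (j + 1) * Real.Gamma (r + k - j)))
            * x ^ (k - j)
        + (Real.Gamma (r + k) / (lam ^ k * Real.Gamma r))
            * ∑ j ∈ Finset.range k, 1 / (lam * ((k : ℝ) - j))) :
    ∀ x : ℝ, 0 < x →
      x * deriv (deriv F) x + (r - lam * x) * deriv F x
        = x ^ k - Real.Gamma (r + k) / (lam ^ k * Real.Gamma r) :=
  stmt_5_general r lam hr hlam k F hF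
end

section
/- Let α, β > 0 and k a positive integer. Define F(x) = -∑_{j=0}^{k-1} [1/((k-j)(k-j-1+α+β))] (∏_{i=1}^{j} (k-i+α)/(k-i+α+β)) x^{k-j} + [∑_{j=0}^{k-1} 1/((k-j)(k-j-1+α+β))] ∏_{r=0}^{k-1} (α+r)/(α+β+r). Then x(1-x) F''(x) + (α(1-x) - βx) F'(x) = x^k - ∏_{r=0}^{k-1} (α+r)/(α+β+r) for all x ∈ [0,1]. -/
/-!
The Stein operator sends `x ^ m` to `m (m - 1 + α) x ^ (m - 1) - m (m - 1 + α + β) x ^ m`.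
Writing `P j` for the partial product `∏_{i=1}^{j} (k-i+α)/(k-i+α+β)`, the monomial of `F` of
degree `m = k - j` is therefore sent to `P j x ^ (k - j) - P (j + 1) x ^ (k - j - 1)`, so the
image of `F` telescopes to `P 0 x ^ k - P k`, and `P k` is the `k`-th Beta moment.
-/

open Finset

noncomputable def betaStein (α β : ℝ) (f : ℝ → ℝ) (x : ℝ) : ℝ :=
  x * (1 - x) * deriv (deriv f) x + (α * (1 - x) - β * x) * deriv f x

theorem deriv_sum_mul_add_const {ι : Type*} (s : Finset ι) (a : ι → ℝ) (f : ι → ℝ → ℝ)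
    (c : ℝ) (hf : ∀ j ∈ s, Differentiable ℝ (f j)) :
    deriv (fun x => ∑ j ∈ s, a j * f j x + c) = fun x => ∑ j ∈ s, a j * deriv (f j) x := by
  ext x
  rw [deriv_add_const, deriv_fun_sum fun j hj => ((hf j hj) x).const_mul (a j)]
  exact sum_congr rfl fun j _ => deriv_const_mul_field (a j)

theorem betaStein_sum_mul_add_const {ι : Type*} (α β : ℝ) (s : Finset ι) (a : ι → ℝ)
    (f : ι → ℝ → ℝ) (c : ℝ) (hf : ∀ j ∈ s, Differentiable ℝ (f j))
    (hf' : ∀ j ∈ s, Differentiable ℝ (deriv (f j))) (x : ℝ) :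
    betaStein α β (fun x => ∑ j ∈ s, a j * f j x + c) x
      = ∑ j ∈ s, a j * betaStein α β (f j) x := by
  have hd2 := deriv_sum_mul_add_const s a (fun j => deriv (f j)) 0 hf'
  simp only [add_zero] at hd2
  simp only [betaStein, deriv_sum_mul_add_const s a f c hf, hd2, mul_sum, ← sum_add_distrib]
  exact sum_congr rfl fun j _ => by ring

theorem deriv_pow_field' (n : ℕ) : deriv (fun x : ℝ => x ^ n) = fun x => (n : ℝ) * x ^ (n - 1) :=
  funext fun _ => deriv_pow_field n

theorem betaStein_sum_mul_pow_add_const {ι : Type*} (α β : ℝ) (s : Finset ι) (a : ι → ℝ)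
    (n : ι → ℕ) (c x : ℝ) :
    betaStein α β (fun x => ∑ j ∈ s, a j * x ^ n j + c) x
      = ∑ j ∈ s, a j * betaStein α β (· ^ n j) x :=
  betaStein_sum_mul_add_const α β s a (fun j x => x ^ n j) c (fun _ _ => by fun_prop)
    (fun _ _ => by rw [deriv_pow_field']; fun_prop) x

theorem betaStein_pow (α β : ℝ) (n : ℕ) (x : ℝ) :
    betaStein α β (fun x => x ^ n) x
      = n * (n - 1 + α) * x ^ (n - 1) - n * (n - 1 + α + β) * x ^ n := by
  rw [betaStein, deriv_pow_field', deriv_const_mul_field, deriv_pow_field]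
  rcases n with _ | _ | n
  · simp
  · simp only [Nat.sub_self, Nat.cast_zero, pow_zero]; ring
  · push_cast; simp only [pow_succ]; ring

theorem betaStein_pow_div (α β : ℝ) (hαβ : 0 < α + β) (m : ℕ) (hm : 1 ≤ m) (x : ℝ) :
    betaStein α β (· ^ m) x / (m * (m - 1 + α + β))
      = (m - 1 + α) / (m - 1 + α + β) * x ^ (m - 1) - x ^ m := by
  have hm' : (1 : ℝ) ≤ m := by exact_mod_cast hm
  have hd : (m : ℝ) - 1 + α + β ≠ 0 := by linarith
  rw [betaStein_pow]
  field_simp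

theorem prod_Icc_one_natCast_sub {M : Type*} [CommMonoid M] (g : ℝ → M) (k : ℕ) :
    ∏ i ∈ Icc 1 k, g ((k : ℝ) - i) = ∏ r ∈ range k, g r := by
  refine prod_bij' (fun i _ => k - i) (fun r _ => k - r) (fun i hi => ?_) (fun r hr => ?_)
    (fun i hi => ?_) (fun r hr => ?_) (fun i hi => ?_)
  all_goals simp only [mem_Icc, mem_range] at *
  all_goals first | omega | rw [Nat.cast_sub hi.2]

theorem stmt_10_general (α β : ℝ) (hα : 0 < α) (hβ : 0 < β) (k : ℕ)
    (F : ℝ → ℝ)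
    (hF : ∀ x : ℝ, F x =
      -∑ j ∈ Finset.range k,
          (1 / (((k : ℝ) - j) * ((k : ℝ) - j - 1 + α + β)))
            * (∏ i ∈ Finset.Icc 1 j, ((k : ℝ) - i + α) / ((k : ℝ) - i + α + β))
            * x ^ (k - j)
        + (∑ j ∈ Finset.range k, 1 / (((k : ℝ) - j) * ((k : ℝ) - j - 1 + α + β)))
            * ∏ r ∈ Finset.range k, (α + r) / (α + β + r)) :
    ∀ x ∈ Set.Icc (0 : ℝ) 1,
      x * (1 - x) * deriv (deriv F) x + (α * (1 - x) - β * x) * deriv F x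
        = x ^ k - ∏ r ∈ Finset.range k, (α + r) / (α + β + r) := by
  intro x _
  set P : ℕ → ℝ := fun j => ∏ i ∈ Icc 1 j, ((k : ℝ) - i + α) / ((k : ℝ) - i + α + β)
  obtain ⟨c, hc⟩ : ∃ c, F = fun x =>
      ∑ j ∈ range k, -(1 / (((k : ℝ) - j) * ((k : ℝ) - j - 1 + α + β)) * P j) * x ^ (k - j) + c :=
    ⟨_, funext fun x => by rw [hF x, ← sum_neg_distrib]; simp only [neg_mul]; rfl⟩
  have hterm : ∀ j ∈ range k,
      -(1 / (((k : ℝ) - j) * ((k : ℝ) - j - 1 + α + β)) * P j) * betaStein α β (· ^ (k - j)) x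
        = P j * x ^ (k - j) - P (j + 1) * x ^ (k - (j + 1)) := by
    intro j hj
    have hjk : j < k := mem_range.mp hj
    have hPsucc : P (j + 1) = P j * (((k : ℝ) - j - 1 + α) / ((k : ℝ) - j - 1 + α + β)) := by
      simp only [P, prod_Icc_succ_top (Nat.le_add_left 1 j), Nat.cast_succ, sub_add_eq_sub_sub]
    have hdiv := betaStein_pow_div α β (by linarith) (k - j) (by omega) x
    rw [Nat.cast_sub hjk.le] at hdiv
    rw [show k - (j + 1) = k - j - 1 by omega, hPsucc]
    linear_combination (-P j) * hdiv
  change betaStein α β F x = _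
  rw [hc, betaStein_sum_mul_pow_add_const, sum_congr rfl hterm,
    sum_range_sub' (fun j => P j * x ^ (k - j))]
  have hPk : P k = ∏ r ∈ range k, (α + r) / (α + β + r) :=
    (prod_Icc_one_natCast_sub (fun t => (t + α) / (t + α + β)) k).trans
      (prod_congr rfl fun r _ => by ring_nf)
  rw [hPk, Nat.sub_zero, Nat.sub_self, pow_zero, mul_one]
  simp [P]

/-- The explicit polynomial solves the Beta(α, β) Stein equation
`x(1-x) F''(x) + (α(1-x) - βx) F'(x) = x^k - E[Z^k]` on `[0,1]`. -/
theorem stmt_10 (α β : ℝ) (hα : 0 < α) (hβ : 0 < β) (k : ℕ) (hk : 0 < k)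
    (F : ℝ → ℝ)
    (hF : ∀ x : ℝ, F x =
      -∑ j ∈ Finset.range k,
          (1 / (((k : ℝ) - j) * ((k : ℝ) - j - 1 + α + β)))
            * (∏ i ∈ Finset.Icc 1 j, ((k : ℝ) - i + α) / ((k : ℝ) - i + α + β))
            * x ^ (k - j)
        + (∑ j ∈ Finset.range k, 1 / (((k : ℝ) - j) * ((k : ℝ) - j - 1 + α + β)))
            * ∏ r ∈ Finset.range k, (α + r) / (α + β + r)) :
    ∀ x ∈ Set.Icc (0 : ℝ) 1,
      x * (1 - x) * deriv (deriv F) x + (α * (1 - x) - β * x) * deriv F x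
        = x ^ k - ∏ r ∈ Finset.range k, (α + r) / (α + β + r) :=
  stmt_10_general α β hα hβ k F hF
end

section
/- Let α, β > 0 and k a positive integer, and let F be the solution to the Beta Stein equation for h(x) = x^k given by F(x) = -∑_{j=0}^{k-1} c_j x^{k-j} + C with c_j = [1/((k-j)(k-j-1+α+β))] ∏_{i=1}^{j} (k-i+α)/(k-i+α+β) and C a constant. Then for all x ∈ [0,1], |F'(x)| ≤ k/(α+β). -/
open Finset

/-!
Differentiating termwise, `F'(x) = -∑_{j<k} c_j (k - j) x^{k-j-1}`. The factor `k - j` cancels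
against `c_j`, leaving a product of ratios `(k-i+α)/(k-i+α+β) ∈ [0,1]` times `x^{k-j-1} ∈ [0,1]`
over `k - j - 1 + α + β ≥ α + β`; so each of the `k` terms is at most `1/(α+β)`.
-/

noncomputable def steinCoeff (α β : ℝ) (k j : ℕ) : ℝ :=
  (1 / (((k : ℝ) - j) * ((k : ℝ) - j - 1 + α + β)))
    * ∏ i ∈ Finset.Icc 1 j, ((k : ℝ) - i + α) / ((k : ℝ) - i + α + β)

lemma prod_div_add_mem_Icc {ι : Type*} (s : Finset ι) (a : ι → ℝ) {b : ℝ}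
    (ha : ∀ i ∈ s, 0 < a i) (hb : 0 ≤ b) :
    ∏ i ∈ s, a i / (a i + b) ∈ Set.Icc (0 : ℝ) 1 := by
  have hfac : ∀ i ∈ s, 0 ≤ a i / (a i + b) ∧ a i / (a i + b) ≤ 1 := fun i hi =>
    ⟨div_nonneg (ha i hi).le (by linarith [ha i hi]),
      (div_le_one (by linarith [ha i hi])).mpr (by linarith)⟩
  exact ⟨prod_nonneg fun i hi => (hfac i hi).1,
    prod_le_one (fun i hi => (hfac i hi).1) fun i hi => (hfac i hi).2⟩

lemma steinCoeff_mul_sub (α β : ℝ) {k j : ℕ} (hj : j < k) :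
    steinCoeff α β k j * ((k - j : ℕ) : ℝ)
      = (∏ i ∈ Icc 1 j, ((k : ℝ) - i + α) / ((k : ℝ) - i + α + β))
          / ((k : ℝ) - j - 1 + α + β) := by
  have hkj : (0 : ℝ) < (k : ℝ) - j := by
    have : (j : ℝ) < k := by exact_mod_cast hj
    linarith
  rw [steinCoeff, Nat.cast_sub hj.le]
  field_simp

lemma abs_steinCoeff_mul_deriv_pow_le {α β : ℝ} (hα : 0 < α) (hβ : 0 < β) {k j : ℕ}
    (hj : j < k) {x : ℝ} (hx : x ∈ Set.Icc (0 : ℝ) 1) :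
    |steinCoeff α β k j * (((k - j : ℕ) : ℝ) * x ^ (k - j - 1))| ≤ 1 / (α + β) := by
  have hjk : (j : ℝ) + 1 ≤ k := by exact_mod_cast hj
  obtain ⟨hP0, hP1⟩ := prod_div_add_mem_Icc (Icc 1 j) (fun i : ℕ => (k : ℝ) - i + α)
    (fun i hi => by
      have : (i : ℝ) ≤ j := by exact_mod_cast (mem_Icc.mp hi).2
      linarith) hβ.le
  have hpow0 : 0 ≤ x ^ (k - j - 1) := pow_nonneg hx.1 _
  rw [← mul_assoc, steinCoeff_mul_sub α β hj, div_mul_eq_mul_div,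
    abs_of_nonneg (div_nonneg (mul_nonneg hP0 hpow0) (by linarith))]
  refine div_le_div₀ zero_le_one ?_ (by linarith) (by linarith)
  exact mul_le_one₀ hP1 hpow0 (pow_le_one₀ hx.1 hx.2)

theorem stmt_11_general (α β : ℝ) (hα : 0 < α) (hβ : 0 < β) (k : ℕ)
    (C : ℝ) (F : ℝ → ℝ)
    (hF : ∀ x : ℝ, F x =
      -∑ j ∈ Finset.range k,
          (1 / (((k : ℝ) - j) * ((k : ℝ) - j - 1 + α + β)))
            * (∏ i ∈ Finset.Icc 1 j, ((k : ℝ) - i + α) / ((k : ℝ) - i + α + β))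
            * x ^ (k - j)
        + C) :
    ∀ x ∈ Set.Icc (0 : ℝ) 1, |deriv F x| ≤ k / (α + β) := by
  intro x hx
  have hF' : F = fun y => -∑ j ∈ range k, steinCoeff α β k j * y ^ (k - j) + C :=
    funext hF
  have hderiv : HasDerivAt F
      (-∑ j ∈ range k, steinCoeff α β k j * (((k - j : ℕ) : ℝ) * x ^ (k - j - 1))) x := by
    rw [hF']
    exact ((HasDerivAt.fun_sum fun j _ =>
      (hasDerivAt_pow (k - j) x).const_mul (steinCoeff α β k j)).neg).add_const C
  rw [hderiv.deriv, abs_neg]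
  calc |∑ j ∈ range k, steinCoeff α β k j * (((k - j : ℕ) : ℝ) * x ^ (k - j - 1))|
      ≤ ∑ j ∈ range k, |steinCoeff α β k j * (((k - j : ℕ) : ℝ) * x ^ (k - j - 1))| :=
        abs_sum_le_sum_abs _ _
    _ ≤ ∑ _j ∈ range k, 1 / (α + β) := sum_le_sum fun j hj =>
        abs_steinCoeff_mul_deriv_pow_le hα hβ (mem_range.mp hj) hx
    _ = k / (α + β) := by rw [sum_const, card_range, nsmul_eq_mul, mul_one_div]

/-- First-derivative bound for the polynomial solution to the Beta(α,β) Stein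
equation for `h(x) = x^k`: `|F'(x)| ≤ k/(α+β)` on `[0,1]`. -/
theorem stmt_11 (α β : ℝ) (hα : 0 < α) (hβ : 0 < β) (k : ℕ) (hk : 0 < k)
    (C : ℝ) (F : ℝ → ℝ)
    (hF : ∀ x : ℝ, F x =
      -∑ j ∈ Finset.range k,
          (1 / (((k : ℝ) - j) * ((k : ℝ) - j - 1 + α + β)))
            * (∏ i ∈ Finset.Icc 1 j, ((k : ℝ) - i + α) / ((k : ℝ) - i + α + β))
            * x ^ (k - j)
        + C) :
    ∀ x ∈ Set.Icc (0 : ℝ) 1, |deriv F x| ≤ k / (α + β) :=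
  stmt_11_general α β hα hβ k C F hF
end

section
/- With F as the polynomial solution of the Beta(α,β) Stein equation for h(x) = x^k, for every integer n ≥ 1 and all x ∈ [0,1], the n-th derivative satisfies |F^{(n)}(x)| ≤ k(k-1)···(k-n+1) / (n(α+β+n-1)). -/
open Finset

/-!
On `[0, 1]` each monomial of `F⁽ⁿ⁾` is bounded by its coefficient, so `|F⁽ⁿ⁾(x)|` is at most
`∑_{j<k} (k-j)⋯(k-j-n+1) P_j / ((k-j)(k-j-1+α+β))`, where `P_j` is the product in `F`.
This sum telescopes against `b_j = (k-j)⋯(k-j-n+1) P_j / (n(α+β+n-1))`: the `j`-th term is at most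
`b_j - b_{j+1}` (using `P_{j+1} = P_j (k-j-1+α)/(k-j-1+α+β)`), and `b_k = 0`, so the sum is at
most `b_0 = k(k-1)⋯(k-n+1) / (n(α+β+n-1))`.
-/

lemma iteratedDeriv_fun_sum_mul_pow {𝕜 ι : Type*} [NontriviallyNormedField 𝕜] (s : Finset ι)
    (a : ι → 𝕜) (e : ι → ℕ) (n : ℕ) (x : 𝕜) :
    iteratedDeriv n (fun y => ∑ i ∈ s, a i * y ^ e i) x
      = ∑ i ∈ s, a i * ((e i).descFactorial n * x ^ (e i - n)) := by
  rw [iteratedDeriv_fun_sum fun i _ => by fun_prop]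
  simp only [iteratedDeriv_const_mul_field, iteratedDeriv_pow]

namespace BetaStein

variable {α β : ℝ}

noncomputable def ratioProd (α β : ℝ) (k j : ℕ) : ℝ :=
  ∏ i ∈ Icc 1 j, ((k : ℝ) - i + α) / ((k : ℝ) - i + α + β)

lemma ratioProd_nonneg (hα : 0 < α) (hβ : 0 < β) {k j : ℕ} (hj : j ≤ k) :
    0 ≤ ratioProd α β k j := by
  refine prod_nonneg fun i hi => ?_
  have hik : (i : ℝ) ≤ k := by exact_mod_cast (mem_Icc.1 hi).2.trans hj
  apply div_nonneg <;> linarith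

lemma ratioProd_succ (k j : ℕ) :
    ratioProd α β k (j + 1)
      = ratioProd α β k j * (((k : ℝ) - (j + 1) + α) / ((k : ℝ) - (j + 1) + α + β)) := by
  rw [ratioProd, prod_Icc_succ_top (Nat.le_add_left 1 j), ratioProd]
  push_cast
  rfl

lemma descFactorial_div_le (hα : 0 < α) (hβ : 0 < β) (m : ℕ) {n : ℕ} (hn : 1 ≤ n) :
    ((m + 1).descFactorial n : ℝ) / ((m + 1) * (m + α + β))
      ≤ (((m + 1).descFactorial n : ℝ) - m.descFactorial n * ((m + α) / (m + α + β)))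
        / (n * (α + β + n - 1)) := by
  obtain ⟨n, rfl⟩ : ∃ n', n = n' + 1 := ⟨n - 1, by omega⟩
  rw [Nat.succ_descFactorial_succ, Nat.descFactorial_succ]
  rcases lt_or_ge m n with hmn | hnm
  · simp [Nat.descFactorial_eq_zero_iff_lt.2 hmn]
  have hnm' : (n : ℝ) ≤ m := by exact_mod_cast hnm
  have hpos : 0 < (m : ℝ) + α + β := by positivity
  -- the two sides differ by `(m - n) * (β + n + 1)`
  have key : (n + 1) * (α + β + n) ≤ (m + 1) * (m + α + β) - (m - n) * (m + α) := by
    nlinarith [mul_nonneg (sub_nonneg.2 hnm') (by positivity : (0 : ℝ) ≤ β + n + 1)]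
  push_cast [Nat.cast_sub hnm]
  rw [show α + β + ((n : ℝ) + 1) - 1 = α + β + n by ring]
  set D : ℝ := (m.descFactorial n : ℝ)
  have hD : 0 ≤ D := Nat.cast_nonneg _
  calc ((m : ℝ) + 1) * D / ((m + 1) * (m + α + β)) = D / (m + α + β) := by
        field_simp
    _ ≤ D * ((m + 1) * (m + α + β) - (m - n) * (m + α))
          / ((m + α + β) * ((n + 1) * (α + β + n))) := by
        rw [div_le_div_iff₀ (by positivity) (by positivity)]
        nlinarith [mul_le_mul_of_nonneg_left key (mul_nonneg hD hpos.le)]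
    _ = _ := by
        have : 0 < α + β + n := by positivity
        field_simp

noncomputable def potential (α β : ℝ) (k n j : ℕ) : ℝ :=
  (k - j).descFactorial n / (n * (α + β + n - 1)) * ratioProd α β k j

lemma coeff_mul_descFactorial_le_potential_sub (hα : 0 < α) (hβ : 0 < β) {k n j : ℕ}
    (hn : 1 ≤ n) (hj : j < k) :
    1 / (((k : ℝ) - j) * ((k : ℝ) - j - 1 + α + β)) * ratioProd α β k j * (k - j).descFactorial n
      ≤ potential α β k n j - potential α β k n (j + 1) := by
  obtain ⟨m, hm⟩ : ∃ m, k - j = m + 1 := ⟨k - j - 1, by omega⟩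
  have hm' : k - (j + 1) = m := by omega
  have hmR : (k : ℝ) - j = m + 1 := by
    rw [← Nat.cast_sub hj.le, hm]; push_cast; ring
  have hstep := mul_le_mul_of_nonneg_left (descFactorial_div_le hα hβ m hn)
    (ratioProd_nonneg hα hβ (k := k) hj.le)
  rw [potential, potential, ratioProd_succ, hm, hm', show (k : ℝ) - (j + 1) = m by linarith, hmR]
  calc _ = _ := by ring
    _ ≤ _ := hstep
    _ = _ := by ring

lemma sum_coeff_mul_descFactorial_le (hα : 0 < α) (hβ : 0 < β) (k : ℕ) {n : ℕ} (hn : 1 ≤ n) :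
    ∑ j ∈ range k,
        1 / (((k : ℝ) - j) * ((k : ℝ) - j - 1 + α + β)) * ratioProd α β k j
          * (k - j).descFactorial n
      ≤ k.descFactorial n / (n * (α + β + n - 1)) := by
  calc _ ≤ ∑ j ∈ range k, (potential α β k n j - potential α β k n (j + 1)) :=
        sum_le_sum fun j hj => coeff_mul_descFactorial_le_potential_sub hα hβ hn (mem_range.1 hj)
    _ = potential α β k n 0 - potential α β k n k := sum_range_sub' _ _
    _ = _ := by
        simp [potential, ratioProd, Nat.descFactorial_eq_zero_iff_lt.2 hn]

end BetaStein

theorem stmt_12_general (α β : ℝ) (hα : 0 < α) (hβ : 0 < β) (k : ℕ)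
    (C : ℝ) (F : ℝ → ℝ)
    (hF : ∀ x : ℝ, F x =
      -∑ j ∈ Finset.range k,
          (1 / (((k : ℝ) - j) * ((k : ℝ) - j - 1 + α + β)))
            * (∏ i ∈ Finset.Icc 1 j, ((k : ℝ) - i + α) / ((k : ℝ) - i + α + β))
            * x ^ (k - j)
        + C) :
    ∀ n : ℕ, 1 ≤ n → n ≤ k → ∀ x ∈ Set.Icc (0 : ℝ) 1,
      |iteratedDeriv n F x| ≤ (k.descFactorial n : ℝ) / (n * (α + β + n - 1)) := by
  intro n hn _ x hx
  set c : ℕ → ℝ := fun j =>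
    1 / (((k : ℝ) - j) * ((k : ℝ) - j - 1 + α + β)) * BetaStein.ratioProd α β k j
  have hc : ∀ j ∈ range k, 0 ≤ c j := fun j hj => by
    have hjk : (j : ℝ) + 1 ≤ k := by exact_mod_cast mem_range.1 hj
    exact mul_nonneg (div_nonneg zero_le_one (mul_nonneg (by linarith) (by linarith)))
      (BetaStein.ratioProd_nonneg hα hβ (mem_range.1 hj).le)
  have hderiv : iteratedDeriv n F x
      = -∑ j ∈ range k, c j * ((k - j).descFactorial n * x ^ (k - j - n)) := by
    rw [show F = fun y => C + -∑ j ∈ range k, c j * y ^ (k - j) from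
      funext fun y => (hF y).trans (add_comm _ _), iteratedDeriv_const_add (by omega),
      iteratedDeriv_fun_neg, iteratedDeriv_fun_sum_mul_pow]
  calc |iteratedDeriv n F x|
      ≤ ∑ j ∈ range k, |c j * ((k - j).descFactorial n * x ^ (k - j - n))| := by
        rw [hderiv, abs_neg]; exact abs_sum_le_sum_abs _ _
    _ ≤ ∑ j ∈ range k, c j * (k - j).descFactorial n := sum_le_sum fun j hj => by
        rw [abs_mul, abs_of_nonneg (hc j hj), abs_mul, Nat.abs_cast, abs_pow]
        exact mul_le_mul_of_nonneg_left (mul_le_of_le_one_right (Nat.cast_nonneg _)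
          (pow_le_one₀ (abs_nonneg x) ((abs_of_nonneg hx.1).trans_le hx.2))) (hc j hj)
    _ ≤ _ := BetaStein.sum_coeff_mul_descFactorial_le hα hβ k hn

/-- Higher derivative bounds for the polynomial solution to the Beta(α,β) Stein
equation for `h(x) = x^k`:
`|F^(n)(x)| ≤ k(k-1)⋯(k-n+1)/(n(α+β+n-1))` on `[0,1]` for `1 ≤ n ≤ k`. -/
theorem stmt_12 (α β : ℝ) (hα : 0 < α) (hβ : 0 < β) (k : ℕ) (hk : 0 < k)
    (C : ℝ) (F : ℝ → ℝ)
    (hF : ∀ x : ℝ, F x =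
      -∑ j ∈ Finset.range k,
          (1 / (((k : ℝ) - j) * ((k : ℝ) - j - 1 + α + β)))
            * (∏ i ∈ Finset.Icc 1 j, ((k : ℝ) - i + α) / ((k : ℝ) - i + α + β))
            * x ^ (k - j)
        + C) :
    ∀ n : ℕ, 1 ≤ n → n ≤ k → ∀ x ∈ Set.Icc (0 : ℝ) 1,
      |iteratedDeriv n F x| ≤ (k.descFactorial n : ℝ) / (n * (α + β + n - 1)) :=
  stmt_12_general α β hα hβ k C F hF
end
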